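/- arXiv:1502.02693 — 8 statements merged into one kernel-verified Lean document; each statement's English description precedes it below -/
import Mathlib

section
/- Let T : X → X be a map on a set X, G a finite group acting on X whose action commutes with T, and let x be a periodic point of T with orbit O_T(x) of length km. If T^m(x) = g(x) for some g ∈ G, with m minimal among positive integers for which such a group element exists, then the intersection O_T(x) ∩ O_G(x) equals {x, T^m(x), T^{2m}(x), ..., T^{(k-1)m}(x)} and also equals the ⟨g⟩-orbit of x, where O_G(x) denotes the G-orbit of x. -/
/-- The (forward) orbit of a point under a map. For a periodic point this is the closed orbit. -/
def Torbit {X : Type*} (T : X → X) (x : X) : Set X := {y | ∃ i : ℕ, T^[i] x = y}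

theorem stmt_0 {X G : Type*} [Group G] [Fintype G] [MulAction G X]
    (T : X → X) (hcomm : ∀ (g : G) (y : X), g • T y = T (g • y))
    (x : X) (k m : ℕ) (hk : 0 < k) (hm : 0 < m)
    (hper : Function.minimalPeriod T x = k * m)
    (g : G) (hg : T^[m] x = g • x)
    (hmin : ∀ m' : ℕ, 0 < m' → (∃ g' : G, T^[m'] x = g' • x) → m ≤ m') :
    Torbit T x ∩ MulAction.orbit G x = {y | ∃ i < k, T^[i * m] x = y} ∧
    Torbit T x ∩ MulAction.orbit G x = MulAction.orbit (Subgroup.zpowers g) x := by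
  have hcomm' : ∀ (j : ℕ) (h : G) (y : X), h • T^[j] y = T^[j] (h • y) := by
    intro j
    induction j with
    | zero => intro h y; simp
    | succ j ih =>
      intro h y
      rw [Function.iterate_succ_apply', Function.iterate_succ_apply', hcomm, ih]
  have hpow : ∀ i : ℕ, T^[i * m] x = g ^ i • x := by
    intro i; induction i with
    | zero => simp
    | succ i ih =>
      have h1 : (i + 1) * m = m + i * m := by ring
      rw [h1, Function.iterate_add_apply, ih, ← hcomm', hg, smul_smul, pow_succ]
  have hper0 : T^[k * m] x = x := by
    have := Function.iterate_minimalPeriod (f := T) (x := x)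
    rwa [hper] at this
  have hred : ∀ q : ℕ, T^[q * m] x = T^[(q % k) * m] x := by
    intro q
    have hq : q * m = q % k * m + q / k * (k * m) := by
      conv_lhs => rw [← Nat.mod_add_div q k]
      ring
    rw [hq, Function.iterate_add_apply]
    congr 1
    exact Function.IsPeriodicPt.const_mul hper0 (q / k)
  have key : ∀ y ∈ Torbit T x ∩ MulAction.orbit G x, ∃ q : ℕ, T^[q * m] x = y := by
    rintro y ⟨⟨i, rfl⟩, hy⟩
    obtain ⟨h, hh0⟩ := hy
    have hh : h • x = T^[i] x := hh0
    set r := i % m with hrdef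
    set q := i / m with hqdef
    have hi : i = r + q * m := (Nat.mod_add_div' i m).symm
    have h1 : T^[i] x = g ^ q • T^[r] x := by
      conv_lhs => rw [hi]
      rw [Function.iterate_add_apply, hpow, ← hcomm']
    have h2 : T^[r] x = ((g ^ q)⁻¹ * h) • x := by
      rw [mul_smul, hh.trans h1, inv_smul_smul]
    have hr0 : r = 0 := by
      by_contra hr
      have hge := hmin r (Nat.pos_of_ne_zero hr) ⟨_, h2⟩
      have hlt : r < m := Nat.mod_lt _ hm
      omega
    rw [hr0, zero_add] at hi
    exact ⟨q, by rw [← hi]⟩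
  constructor
  · ext y
    constructor
    · intro hy
      obtain ⟨q, hq⟩ := key y hy
      exact ⟨q % k, Nat.mod_lt _ hk, by rw [← hred]; exact hq⟩
    · rintro ⟨i, hik, rfl⟩
      exact ⟨⟨i * m, rfl⟩, g ^ i, (hpow i).symm⟩
  · ext y
    constructor
    · intro hy
      obtain ⟨q, hq⟩ := key y hy
      exact ⟨⟨g ^ q, Subgroup.npow_mem_zpowers g q⟩, (hpow q).symm.trans hq⟩
    · rintro ⟨⟨h, hh⟩, rfl⟩
      obtain ⟨z, rfl⟩ := Subgroup.mem_zpowers_iff.mp hh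
      have hord : (0 : ℤ) < (orderOf g : ℤ) := by
        exact_mod_cast orderOf_pos g
      set n : ℕ := (z % (orderOf g : ℤ)).toNat with hn
      have hzn : g ^ z = g ^ n := by
        rw [← zpow_mod_orderOf, ← zpow_natCast]
        congr 1
        rw [hn, Int.toNat_of_nonneg (Int.emod_nonneg z (by omega))]
      have hx : (⟨g ^ z, hh⟩ : Subgroup.zpowers g) • x = g ^ n • x := by
        rw [Subgroup.smul_def]
        simp only [hzn]
      show (⟨g ^ z, hh⟩ : Subgroup.zpowers g) • x ∈ Torbit T x ∩ MulAction.orbit G x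
      rw [hx]
      exact ⟨⟨n * m, hpow n⟩, g ^ n, rfl⟩
end

section
/- Let T : X → X be a map on a set X, G a finite group acting on X whose action commutes with T, and let x be a periodic point of T. Let n be the least period of x under T and let n' be the least period of the G-orbit O_G(x) under the induced map T' on the quotient G\X. Then n = k·n', where k = |O_T(x) ∩ O_G(x)|. (That is, the orbit of x shortens in the quotient exactly by the factor 1/|O_T(x) ∩ O_G(x)|.) -/
theorem stmt_1 {X G : Type*} [Group G] [Fintype G] [MulAction G X]
    (T : X → X) (hcomm : ∀ (g : G) (y : X), g • T y = T (g • y))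
    (T' : Quotient (MulAction.orbitRel G X) → Quotient (MulAction.orbitRel G X))
    (hT' : ∀ y : X, T' (Quotient.mk (MulAction.orbitRel G X) y) =
        Quotient.mk (MulAction.orbitRel G X) (T y))
    (x : X) (hx : x ∈ Function.periodicPts T) :
    Function.minimalPeriod T x =
      (Torbit T x ∩ MulAction.orbit G x).ncard *
        Function.minimalPeriod T' (Quotient.mk (MulAction.orbitRel G X) x) := by
  set π : X → Quotient (MulAction.orbitRel G X) := Quotient.mk (MulAction.orbitRel G X) with hπ
  have hiter : ∀ (i : ℕ) (y : X), T'^[i] (π y) = π (T^[i] y) := by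
    intro i
    induction i with
    | zero => intro y; simp
    | succ i ih =>
      intro y
      rw [Function.iterate_succ_apply, hT', ih, Function.iterate_succ_apply]
  set n := Function.minimalPeriod T x with hn
  set n' := Function.minimalPeriod T' (π x) with hn'
  have hnpos : 0 < n := Function.minimalPeriod_pos_of_mem_periodicPts hx
  have hpn : Function.IsPeriodicPt T' n (π x) := by
    show T'^[n] (π x) = π x
    rw [hiter, Function.iterate_minimalPeriod]
  have hdvd : n' ∣ n := hpn.minimalPeriod_dvd
  have hn'pos : 0 < n' :=
    Function.minimalPeriod_pos_of_mem_periodicPts ⟨n, hnpos, hpn⟩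
  -- key: T^[i] x ∈ orbit G x ↔ n' ∣ i
  have hkey : ∀ i : ℕ, T^[i] x ∈ MulAction.orbit G x ↔ n' ∣ i := by
    intro i
    rw [← Function.isPeriodicPt_iff_minimalPeriod_dvd]
    constructor
    · intro h
      show T'^[i] (π x) = π x
      rw [hiter]
      exact Quotient.sound ((MulAction.orbitRel_apply).mpr h)
    · intro h
      have : π (T^[i] x) = π x := by rw [← hiter]; exact h
      exact (MulAction.orbitRel_apply).mp (Quotient.exact this)
  set k := n / n' with hk
  have hkn : k * n' = n := Nat.div_mul_cancel hdvd
  have hkpos : 0 < k := by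
    rcases Nat.eq_zero_or_pos k with h | h
    · rw [h, zero_mul] at hkn; omega
    · exact h
  have hset : Torbit T x ∩ MulAction.orbit G x = (fun j : ℕ => T^[j * n'] x) '' Set.Iio k := by
    ext y
    constructor
    · rintro ⟨⟨i, rfl⟩, hmem⟩
      obtain ⟨j, rfl⟩ := (hkey i).mp hmem
      refine ⟨j % k, ?_, ?_⟩
      · exact Nat.mod_lt _ hkpos
      · show T^[j % k * n'] x = T^[n' * j] x
        rw [mul_comm n' j]
        conv_rhs => rw [← Function.iterate_mod_minimalPeriod_eq (n := j * n')]
        rw [← hn, ← hkn, Nat.mul_mod_mul_right]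
    · rintro ⟨j, hj, rfl⟩
      exact ⟨⟨j * n', rfl⟩, (hkey _).mpr ⟨j, mul_comm _ _⟩⟩
  have hinj : Set.InjOn (fun j : ℕ => T^[j * n'] x) (Set.Iio k) := by
    intro a ha b hb hab
    have ha' : a * n' < n := by rw [← hkn]; exact (Nat.mul_lt_mul_right hn'pos).mpr ha
    have hb' : b * n' < n := by rw [← hkn]; exact (Nat.mul_lt_mul_right hn'pos).mpr hb
    have := Function.iterate_injOn_Iio_minimalPeriod (f := T) (x := x) ha' hb' hab
    exact Nat.eq_of_mul_eq_mul_right hn'pos this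
  rw [hset, Set.ncard_image_of_injOn hinj]
  have : (Set.Iio k).ncard = k := by
    rw [← Nat.card_coe_set_eq, Nat.card_eq_fintype_card]
    simp
  rw [this, hkn]
end

section
/- Let T : X → X be a map, G a finite group acting on X commuting with T, and x a periodic point of T. If the T-orbit of x shortens in the quotient by a factor 1/k (i.e. |O_T(x) ∩ O_G(x)| = k), then there exists g ∈ G such that O_T(x) ∩ O_G(x) = {x, g(x), g²(x), ..., g^{k-1}(x)} with g^k(x) = x and k minimal with this property. -/
theorem stmt_2 {X G : Type*} [Group G] [Fintype G] [MulAction G X]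
    (T : X → X) (hcomm : ∀ (g : G) (y : X), g • T y = T (g • y))
    (x : X) (hx : x ∈ Function.periodicPts T) (k : ℕ)
    (hk : (Torbit T x ∩ MulAction.orbit G x).ncard = k) :
    ∃ g : G, Torbit T x ∩ MulAction.orbit G x = {y | ∃ i < k, g ^ i • x = y} ∧
      g ^ k • x = x ∧ ∀ j : ℕ, 0 < j → g ^ j • x = x → k ≤ j := by
  have hcomm' : ∀ (g : G) (i : ℕ) (y : X), g • T^[i] y = T^[i] (g • y) := by
    intro g i
    induction i with
    | zero => intro y; simp
    | succ i ih =>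
      intro y
      rw [Function.iterate_succ_apply, ih, hcomm, ← Function.iterate_succ_apply]
  set n := Function.minimalPeriod T x with hn_def
  have hn : 0 < n := Function.minimalPeriod_pos_of_mem_periodicPts hx
  have hTn : T^[n] x = x := Function.iterate_minimalPeriod
  have hmod : ∀ i, T^[i] x = T^[i % n] x := fun i =>
    (Function.iterate_mod_minimalPeriod_eq).symm
  set I : Set ℕ := {i | T^[i] x ∈ MulAction.orbit G x} with hI_def
  have hIn : n ∈ I := by simp [hI_def, hTn, MulAction.mem_orbit_self]
  have hIadd : ∀ i ∈ I, ∀ j ∈ I, i + j ∈ I := by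
    intro i hi j hj
    obtain ⟨g, hg⟩ := MulAction.mem_orbit_iff.mp hi
    obtain ⟨h, hh⟩ := MulAction.mem_orbit_iff.mp hj
    refine MulAction.mem_orbit_iff.mpr ⟨g * h, ?_⟩
    simp only [mul_smul]
    rw [hh, hcomm', hg, ← Function.iterate_add_apply, Nat.add_comm]
  have hIaddn : ∀ i, i + n ∈ I ↔ i ∈ I := by
    intro i
    simp only [hI_def, Set.mem_setOf_eq, Function.iterate_add_apply, hTn]
  have hIsub : ∀ i ∈ I, i ≤ n → n - i ∈ I := by
    intro i hi hin
    obtain ⟨g, hg⟩ := MulAction.mem_orbit_iff.mp hi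
    refine MulAction.mem_orbit_iff.mpr ⟨g⁻¹, ?_⟩
    have h1 : g • T^[n - i] x = x := by
      rw [hcomm', hg, ← Function.iterate_add_apply, Nat.sub_add_cancel hin, hTn]
    exact inv_smul_eq_iff.mpr h1.symm
  have hne : (n ∈ {i | 0 < i ∧ i ∈ I}) := ⟨hn, hIn⟩
  set m := sInf {i | 0 < i ∧ i ∈ I} with hm_def
  have hm_mem : 0 < m ∧ m ∈ I := Nat.sInf_mem ⟨n, hne⟩
  have hm_pos : 0 < m := hm_mem.1
  have hmI : m ∈ I := hm_mem.2
  have hm_min : ∀ j, 0 < j → j ∈ I → m ≤ j := fun j h1 h2 => Nat.sInf_le ⟨h1, h2⟩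
  have hm_le_n : m ≤ n := hm_min n hn hIn
  have hIsubm : ∀ i ∈ I, m ≤ i → i - m ∈ I := by
    intro i hi hmi
    have h1 : n - m ∈ I := hIsub m hmI hm_le_n
    have h2 : i + (n - m) ∈ I := hIadd i hi _ h1
    have h3 : i + (n - m) = (i - m) + n := by omega
    rw [h3] at h2
    exact (hIaddn _).1 h2
  have hImodm : ∀ i ∈ I, i % m ∈ I := by
    intro i
    induction i using Nat.strong_induction_on with
    | _ i ih =>
      intro hi
      rcases lt_or_ge i m with h | h
      · rwa [Nat.mod_eq_of_lt h]
      · have := ih (i - m) (by omega) (hIsubm i hi h)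
        rwa [Nat.mod_eq_sub_mod h]
  have hdvd : ∀ i ∈ I, m ∣ i := by
    intro i hi
    have h1 := hImodm i hi
    rcases Nat.eq_zero_or_pos (i % m) with h | h
    · exact Nat.dvd_of_mod_eq_zero h
    · exact absurd (hm_min _ h h1) (by have := Nat.mod_lt i hm_pos; omega)
  obtain ⟨q, hq⟩ := hdvd n hIn
  have hq_pos : 0 < q := Nat.pos_of_ne_zero (by rintro rfl; simp at hq; omega)
  -- multiples of m are in I
  have hmul : ∀ j : ℕ, j * m ∈ I := by
    intro j
    induction j with
    | zero => simp [hI_def, MulAction.mem_orbit_self x]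
    | succ j ih => rw [Nat.succ_mul]; exact hIadd _ ih _ hmI
  -- description of the intersection
  have hS : Torbit T x ∩ MulAction.orbit G x = (fun j => T^[j * m] x) '' Set.Iio q := by
    ext y
    constructor
    · rintro ⟨⟨i, hi⟩, hy⟩
      have hiI : i ∈ I := by rw [hI_def]; simpa [hi] using hy
      have h2 : i % n ∈ I := by rw [hI_def]; simp only [Set.mem_setOf_eq, ← hmod]; exact hiI
      obtain ⟨j, hj⟩ := hdvd _ h2
      refine ⟨j, ?_, ?_⟩
      · have h3 : m * j < m * q := by rw [← hj, ← hq]; exact Nat.mod_lt i hn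
        exact Set.mem_Iio.mpr (lt_of_mul_lt_mul_left h3 (Nat.zero_le m))
      · simp only [Nat.mul_comm j m, ← hj, ← hmod, hi]
    · rintro ⟨j, hj, rfl⟩
      exact ⟨⟨j * m, rfl⟩, hmul j⟩
  -- cardinality
  have hinj : Set.InjOn (fun j => T^[j * m] x) (Set.Iio q) := by
    intro a ha b hb hab
    have ha' : a * m < n := by rw [hq]; rw [Nat.mul_comm m q]; exact (Nat.mul_lt_mul_right hm_pos).mpr ha
    have hb' : b * m < n := by rw [hq]; rw [Nat.mul_comm m q]; exact (Nat.mul_lt_mul_right hm_pos).mpr hb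
    have := Function.iterate_injOn_Iio_minimalPeriod (f := T) (x := x) ha' hb' hab
    exact Nat.eq_of_mul_eq_mul_right hm_pos this
  have hkq : k = q := by
    rw [← hk, hS, Set.ncard_image_of_injOn hinj, ← Finset.coe_range,
      Set.ncard_coe_finset, Finset.card_range]
  -- the element g
  obtain ⟨g, hg⟩ := MulAction.mem_orbit_iff.mp hmI
  have hpow : ∀ j : ℕ, g ^ j • x = T^[j * m] x := by
    intro j
    induction j with
    | zero => simp
    | succ j ih =>
      rw [pow_succ, mul_smul, hg, hcomm', ih, ← Function.iterate_add_apply, Nat.succ_mul,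
        Nat.add_comm]
  refine ⟨g, ?_, ?_, ?_⟩
  · rw [hS]
    ext y
    simp only [Set.mem_image, Set.mem_Iio, Set.mem_setOf_eq, hkq, hpow]
  · rw [hpow, hkq, Nat.mul_comm, ← hq]
    exact hTn
  · intro j hj hgj
    rw [hpow] at hgj
    have : Function.IsPeriodicPt T (j * m) x := hgj
    have h1 : n ≤ j * m := this.minimalPeriod_le (by positivity)
    rw [hq, Nat.mul_comm j m] at h1
    rw [hkq]
    exact le_of_mul_le_mul_left h1 hm_pos
end

section
/- Let T : X → X be a map, G a finite group acting on X commuting with T, and x a periodic point of T. Then |O_T(x) ∩ O_G(x)| divides |O_G(x)|, and the number of distinct T-orbits mapped by the quotient map onto the T'-orbit of O_G(x) (i.e. the number of T-orbits contained in the union ⋃_{g∈G} g(O_T(x))) equals |O_G(x)| / |O_T(x) ∩ O_G(x)|. -/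
open Function MulAction Pointwise

theorem Set.ncard_eq_ncard_image_mul {α β : Type*} {s : Set α} (hs : s.Finite) (f : α → β)
    {c : ℕ} (hc : ∀ b ∈ f '' s, {a ∈ s | f a = b}.ncard = c) :
    s.ncard = (f '' s).ncard * c := by
  classical
  obtain ⟨s, rfl⟩ := hs.exists_finset_coe
  simp only [← Finset.coe_filter, ← Finset.coe_image, Set.ncard_coe_finset, Finset.mem_coe]
    at hc ⊢
  rw [Finset.card_eq_sum_card_image f s, Finset.sum_congr rfl hc, Finset.sum_const, smul_eq_mul]

section Torbit

variable {X : Type*} {T : X → X}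

theorem mem_Torbit_self (y : X) : y ∈ Torbit T y := ⟨0, rfl⟩

theorem Torbit_subset_of_mem {y z : X} (hz : z ∈ Torbit T y) : Torbit T z ⊆ Torbit T y := by
  obtain ⟨i, rfl⟩ := hz
  rintro w ⟨j, rfl⟩
  exact ⟨j + i, iterate_add_apply T j i y⟩

theorem Torbit_eq_of_mem {y z : X} (hy : y ∈ periodicPts T) (hz : z ∈ Torbit T y) :
    Torbit T z = Torbit T y := by
  refine (Torbit_subset_of_mem hz).antisymm (Torbit_subset_of_mem ?_)
  obtain ⟨n, hn, hny⟩ := hy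
  obtain ⟨i, rfl⟩ := hz
  refine ⟨(n - 1) * i, ?_⟩
  rw [← iterate_add_apply, ← Nat.succ_mul, Nat.succ_eq_add_one, Nat.sub_one_add_one hn.ne']
  exact (hny.mul_const i).eq

theorem mem_Torbit_iff_Torbit_eq {y z : X} (hz : z ∈ periodicPts T) :
    y ∈ Torbit T z ↔ Torbit T y = Torbit T z :=
  ⟨Torbit_eq_of_mem hz, fun h => h ▸ mem_Torbit_self y⟩

theorem setOf_Torbit_biUnion {S : Set X} (hS : S ⊆ periodicPts T) :
    {A : Set X | ∃ y ∈ ⋃ z ∈ S, Torbit T z, A = Torbit T y} = Torbit T '' S := by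
  ext A
  simp only [Set.mem_iUnion, Set.mem_image, exists_prop]
  constructor
  · rintro ⟨y, ⟨z, hzS, hyz⟩, rfl⟩
    exact ⟨z, hzS, (Torbit_eq_of_mem (hS hzS) hyz).symm⟩
  · rintro ⟨z, hzS, rfl⟩
    exact ⟨z, ⟨z, hzS, mem_Torbit_self z⟩, rfl⟩

end Torbit

section Equivariant

variable {X G : Type*} [Group G] [MulAction G X] {T : X → X}

theorem Torbit_smul (hcomm : ∀ g : G, Function.Commute (g • ·) T) (g : G) (y : X) :
    Torbit T (g • y) = g • Torbit T y := by
  change Set.range _ = (g • ·) '' Set.range _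
  rw [← Set.range_comp]
  exact congrArg Set.range (funext fun i => ((hcomm g).iterate_right i y).symm)

theorem iUnion_image_smul_Torbit (hcomm : ∀ g : G, Function.Commute (g • ·) T) (x : X) :
    ⋃ g : G, (g • ·) '' Torbit T x = ⋃ y ∈ orbit G x, Torbit T y := by
  ext z
  simp only [Set.mem_iUnion, exists_prop, mem_orbit_iff]
  constructor
  · rintro ⟨g, hz⟩
    exact ⟨g • x, ⟨g, rfl⟩, by rwa [Torbit_smul hcomm]⟩
  · rintro ⟨_, ⟨g, rfl⟩, hz⟩
    exact ⟨g, by rwa [Torbit_smul hcomm] at hz⟩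

theorem orbit_subset_periodicPts (hcomm : ∀ g : G, Function.Commute (g • ·) T) {x : X}
    (hx : x ∈ periodicPts T) : orbit G x ⊆ periodicPts T := by
  rintro _ ⟨g, rfl⟩
  exact (hcomm g).mapsTo_periodicPts hx

theorem ncard_orbit_fiber_Torbit (hcomm : ∀ g : G, Function.Commute (g • ·) T) {x : X}
    (hx : x ∈ periodicPts T) (g : G) :
    {y ∈ orbit G x | Torbit T y = Torbit T (g • x)}.ncard =
      (Torbit T x ∩ orbit G x).ncard := by
  have hgx := orbit_subset_periodicPts hcomm hx (mem_orbit x g)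
  have hfiber :
      {y ∈ orbit G x | Torbit T y = Torbit T (g • x)} = g • (Torbit T x ∩ orbit G x) := by
    simp_rw [← mem_Torbit_iff_Torbit_eq hgx, Set.smul_set_inter, smul_orbit,
      ← Torbit_smul hcomm]
    exact Set.inter_comm _ _
  rw [hfiber, Set.ncard_smul_set]

end Equivariant

theorem stmt_3 {X G : Type*} [Group G] [Fintype G] [MulAction G X]
    (T : X → X) (hcomm : ∀ (g : G) (y : X), g • T y = T (g • y))
    (x : X) (hx : x ∈ Function.periodicPts T) :
    (Torbit T x ∩ MulAction.orbit G x).ncard ∣ (MulAction.orbit G x).ncard ∧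
    {A : Set X | ∃ y ∈ ⋃ g : G, (g • ·) '' Torbit T x, A = Torbit T y}.ncard =
      (MulAction.orbit G x).ncard / (Torbit T x ∩ MulAction.orbit G x).ncard := by
  have hcomm' : ∀ g : G, Function.Commute (g • ·) T := hcomm
  have hfin : (orbit G x).Finite := Set.finite_range _
  have hcount : (orbit G x).ncard =
      (Torbit T '' orbit G x).ncard * (Torbit T x ∩ orbit G x).ncard := by
    refine Set.ncard_eq_ncard_image_mul hfin _ ?_
    rintro _ ⟨_, ⟨g, rfl⟩, rfl⟩
    exact ncard_orbit_fiber_Torbit hcomm' hx g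
  have hpos : 0 < (Torbit T x ∩ orbit G x).ncard :=
    (Set.ncard_pos (hfin.subset Set.inter_subset_right)).2
      ⟨x, mem_Torbit_self x, mem_orbit_self x⟩
  rw [iUnion_image_smul_Torbit hcomm',
    setOf_Torbit_biUnion (orbit_subset_periodicPts hcomm' hx), hcount]
  exact ⟨dvd_mul_left _ _, (Nat.mul_div_cancel _ hpos).symm⟩
end

section
/- Let G be a finite group acting on a set X commuting with a map T : X → X, let H ≤ G, and let x be a periodic point of T with stabilizer G_x = H. Suppose the orbit O_T(x) shortens by a factor 1/k in the quotient, i.e. |O_T(x) ∩ O_G(x)| = k, witnessed by g ∈ G with g(x) = T^m(x) (m = |O_T(x)|/k). Then g normalizes H, g^k ∈ H, and k equals the order of the coset gH in the quotient group N_G(H)/H. In particular, k belongs to the set of orders of elements of N_G(H)/H. -/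
/-!
Write `n` for the minimal period of `x`, so `n = k * m`. Because the action commutes with `T`,
every point of the `T`-orbit of `x` has stabilizer `H`; as `g • x = T^[m] x`, this makes `g`
normalize `H`. Moreover `g ^ j • x = T^[j * m] x`, which equals `x` exactly when `n = k * m`
divides `j * m`, i.e. when `k ∣ j`. Hence `g ^ j ∈ H ↔ k ∣ j`, which says that `gH` has order `k`
in `N_G(H)/H`.
-/

open Function MulAction

section Dynamics

variable {X : Type*} {T : X → X} {x : X}

theorem Torbit_eq_image_Iio_minimalPeriod (hx : x ∈ periodicPts T) :
    Torbit T x = (T^[·] x) '' Set.Iio (minimalPeriod T x) := by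
  ext y
  constructor
  · rintro ⟨i, rfl⟩
    exact ⟨i % minimalPeriod T x, Nat.mod_lt _ (minimalPeriod_pos_of_mem_periodicPts hx),
      iterate_mod_minimalPeriod_eq⟩
  · rintro ⟨i, -, rfl⟩
    exact ⟨i, rfl⟩

theorem ncard_Torbit (hx : x ∈ periodicPts T) : (Torbit T x).ncard = minimalPeriod T x := by
  rw [Torbit_eq_image_Iio_minimalPeriod hx, iterate_injOn_Iio_minimalPeriod.ncard_image,
    ← Finset.coe_range, Set.ncard_coe_finset, Finset.card_range]

end Dynamics

section Equivariant

variable {X G : Type*} [Group G] [MulAction G X] {T : X → X}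

theorem stabilizer_le_stabilizer_apply_of_commute (hT : ∀ g : G, Function.Commute (g • ·) T)
    (x : X) : stabilizer G x ≤ stabilizer G (T x) := fun g hg => by
  rw [mem_stabilizer_iff] at hg ⊢
  exact ((hT g).eq x).trans (congrArg T hg)

theorem stabilizer_iterate_of_mem_periodicPts (hT : ∀ g : G, Function.Commute (g • ·) T)
    {x : X} (hx : x ∈ periodicPts T) (i : ℕ) : stabilizer G (T^[i] x) = stabilizer G x := by
  have hTi : ∀ j, ∀ g : G, Function.Commute (g • ·) T^[j] := fun j g => (hT g).iterate_right j
  set n := minimalPeriod T x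
  have hn : 1 ≤ n := minimalPeriod_pos_of_mem_periodicPts hx
  -- `x` lies in the forward orbit of `T^[i] x`, since `n * i` is a period of `x`.
  have hback : T^[n * i - i] (T^[i] x) = x := by
    rw [← iterate_add_apply, Nat.sub_add_cancel (Nat.le_mul_of_pos_left i hn)]
    exact (isPeriodicPt_minimalPeriod T x).mul_const i
  refine le_antisymm ?_ (stabilizer_le_stabilizer_apply_of_commute (hTi i) x)
  calc stabilizer G (T^[i] x)
      ≤ stabilizer G (T^[n * i - i] (T^[i] x)) :=
        stabilizer_le_stabilizer_apply_of_commute (hTi _) _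
    _ = stabilizer G x := by rw [hback]

theorem smul_pow_eq_iterate (hT : ∀ g : G, Function.Commute (g • ·) T) {g : G} {x : X} {m : ℕ}
    (hg : g • x = T^[m] x) (j : ℕ) : g ^ j • x = T^[j * m] x := by
  induction j with
  | zero => simp
  | succ j ih =>
    rw [pow_succ, mul_smul, hg, ((hT _).iterate_right m).eq, ih, ← iterate_add_apply,
      Nat.succ_mul, Nat.add_comm]

theorem pow_smul_eq_self_iff_dvd (hT : ∀ g : G, Function.Commute (g • ·) T) {g : G} {x : X}
    (hx : x ∈ periodicPts T) {k m : ℕ} (hkm : k * m = minimalPeriod T x) (hg : g • x = T^[m] x)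
    (j : ℕ) : g ^ j • x = x ↔ k ∣ j := by
  have hm : 0 < m :=
    Nat.pos_of_mul_pos_left (hkm ▸ minimalPeriod_pos_of_mem_periodicPts hx)
  rw [smul_pow_eq_iterate hT hg]
  change IsPeriodicPt T (j * m) x ↔ _
  rw [isPeriodicPt_iff_minimalPeriod_dvd, ← hkm, Nat.mul_dvd_mul_iff_right hm]

end Equivariant

theorem MulAction.mem_normalizer_stabilizer_of_stabilizer_smul_eq {X G : Type*} [Group G]
    [MulAction G X] {g : G} {x : X} (hgx : stabilizer G (g • x) = stabilizer G x) :
    g ∈ Subgroup.normalizer (stabilizer G x : Set G) := by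
  refine Subgroup.mem_normalizer_iff.mpr fun h => ?_
  conv_rhs => rw [← hgx]
  rw [mem_stabilizer_iff, mem_stabilizer_iff, mul_smul, mul_smul, inv_smul_smul,
    smul_left_cancel_iff]

theorem QuotientGroup.orderOf_mk_subgroupOf_eq {G : Type*} [Group G] {H N : Subgroup G}
    [(H.subgroupOf N).Normal] {a : N} {k : ℕ} (h : ∀ j : ℕ, (a : G) ^ j ∈ H ↔ k ∣ j) :
    orderOf (QuotientGroup.mk a : N ⧸ H.subgroupOf N) = k :=
  Nat.dvd_right_iff_eq.mp fun j => by
    rw [orderOf_dvd_iff_pow_eq_one, ← QuotientGroup.mk_pow, QuotientGroup.eq_one_iff,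
      Subgroup.mem_subgroupOf, Subgroup.coe_pow, h]

theorem stmt_6_general {X G : Type*} [Group G] [MulAction G X]
    (T : X → X) (hcomm : ∀ (g : G) (y : X), g • T y = T (g • y))
    (H : Subgroup G) (x : X) (hx : x ∈ Function.periodicPts T)
    (hH : MulAction.stabilizer G x = H) (k m : ℕ)
    (hm : k * m = (Torbit T x).ncard)
    (g : G) (hg : g • x = T^[m] x) :
    ∃ hgN : g ∈ (Subgroup.normalizer (H : Set G)),
      g ^ k ∈ H ∧
      orderOf (QuotientGroup.mk (⟨g, hgN⟩ : (Subgroup.normalizer (H : Set G))) :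
          (Subgroup.normalizer (H : Set G)) ⧸ H.subgroupOf (Subgroup.normalizer (H : Set G))) = k ∧
      ∃ q : (Subgroup.normalizer (H : Set G)) ⧸ H.subgroupOf (Subgroup.normalizer (H : Set G)), orderOf q = k := by
  subst hH
  have hT : ∀ h : G, Function.Commute (h • ·) T := hcomm
  have hkm : k * m = minimalPeriod T x := hm.trans (ncard_Torbit hx)
  have hgN : g ∈ Subgroup.normalizer (stabilizer G x : Set G) :=
    mem_normalizer_stabilizer_of_stabilizer_smul_eq <| by
      rw [hg, stabilizer_iterate_of_mem_periodicPts hT hx]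
  have hpow (j : ℕ) : g ^ j ∈ stabilizer G x ↔ k ∣ j :=
    pow_smul_eq_self_iff_dvd hT hx hkm hg j
  have hord := QuotientGroup.orderOf_mk_subgroupOf_eq (a := ⟨g, hgN⟩) hpow
  exact ⟨hgN, (hpow k).mpr dvd_rfl, hord, _, hord⟩

theorem stmt_6 {X G : Type*} [Group G] [Fintype G] [MulAction G X]
    (T : X → X) (hcomm : ∀ (g : G) (y : X), g • T y = T (g • y))
    (H : Subgroup G) (x : X) (hx : x ∈ Function.periodicPts T)
    (hH : MulAction.stabilizer G x = H) (k m : ℕ) (hk0 : 0 < k)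
    (hk : (Torbit T x ∩ MulAction.orbit G x).ncard = k)
    (hm : k * m = (Torbit T x).ncard)
    (g : G) (hg : g • x = T^[m] x) :
    ∃ hgN : g ∈ (Subgroup.normalizer (H : Set G)),
      g ^ k ∈ H ∧
      orderOf (QuotientGroup.mk (⟨g, hgN⟩ : (Subgroup.normalizer (H : Set G))) :
          (Subgroup.normalizer (H : Set G)) ⧸ H.subgroupOf (Subgroup.normalizer (H : Set G))) = k ∧
      ∃ q : (Subgroup.normalizer (H : Set G)) ⧸ H.subgroupOf (Subgroup.normalizer (H : Set G)), orderOf q = k :=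
  stmt_6_general T hcomm H x hx hH k m hm g hg
end

section
/- Let G be a finite group acting on a set X commuting with a map T : X → X, and let x be a periodic point of T with stabilizer G_x = H ≤ G. If |O_T(x) ∩ O_G(x)| = k, then k divides the index [G : H], and the number of T-orbits glued to O_T(x) in the quotient (including itself) equals [G : H] / k. -/
open Pointwise

lemma smul_iterate' {X G : Type*} [Group G] [MulAction G X]
    {T : X → X} (hcomm : ∀ (g : G) (y : X), g • T y = T (g • y))
    (g : G) (i : ℕ) (y : X) : g • T^[i] y = T^[i] (g • y) := by
  induction i generalizing y with
  | zero => simp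
  | succ n ih =>
    rw [Function.iterate_succ_apply, ih, hcomm, ← Function.iterate_succ_apply]

lemma mem_torbit_self {X : Type*} (T : X → X) (x : X) : x ∈ Torbit T x := ⟨0, rfl⟩

lemma torbit_eq_of_mem {X : Type*} {T : X → X} {x y : X} (hx : x ∈ Function.periodicPts T)
    (hy : y ∈ Torbit T x) : Torbit T y = Torbit T x := by
  obtain ⟨i, hi⟩ := hy
  obtain ⟨n, hn, hpn⟩ := hx
  ext z
  constructor
  · rintro ⟨j, hj⟩
    exact ⟨j + i, by rw [Function.iterate_add_apply, hi, hj]⟩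
  · rintro ⟨j, hj⟩
    have hle : i ≤ i * n := Nat.le_mul_of_pos_right i hn
    refine ⟨j + (i * n - i), ?_⟩
    rw [← hi, ← Function.iterate_add_apply]
    have h1 : j + (i * n - i) + i = j + i * n := by omega
    rw [h1, Function.iterate_add_apply, (hpn.const_mul i).eq, hj]

theorem stmt_7 {X G : Type*} [Group G] [Fintype G] [MulAction G X]
    (T : X → X) (hcomm : ∀ (g : G) (y : X), g • T y = T (g • y))
    (H : Subgroup G) (x : X) (hx : x ∈ Function.periodicPts T)
    (hH : MulAction.stabilizer G x = H) (k : ℕ)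
    (hk : (Torbit T x ∩ MulAction.orbit G x).ncard = k) :
    k ∣ H.index ∧
    {A : Set X | ∃ y ∈ ⋃ g : G, (g • ·) '' Torbit T x, A = Torbit T y}.ncard =
      H.index / k := by
  classical
  obtain ⟨n, hn, hpn⟩ := hx
  have hperx : x ∈ Function.periodicPts T := ⟨n, hn, hpn⟩
  have hper : ∀ y ∈ MulAction.orbit G x, y ∈ Function.periodicPts T := by
    rintro _ ⟨g, rfl⟩
    exact ⟨n, hn, by
      show T^[n] (g • x) = g • x
      rw [← smul_iterate' hcomm, hpn.eq]⟩
  -- smul of torbit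
  have hsm : ∀ g : G, g • Torbit T x = Torbit T (g • x) := by
    intro g
    ext z
    constructor
    · rintro ⟨_, ⟨i, rfl⟩, rfl⟩
      exact ⟨i, (smul_iterate' hcomm g i x).symm⟩
    · rintro ⟨i, rfl⟩
      exact ⟨T^[i] x, ⟨i, rfl⟩, smul_iterate' hcomm g i x⟩
  have hA : {A : Set X | ∃ y ∈ ⋃ g : G, (g • ·) '' Torbit T x, A = Torbit T y}
      = (Torbit T) '' (MulAction.orbit G x) := by
    ext A
    simp only [Set.mem_setOf_eq, Set.mem_iUnion, Set.mem_image]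
    constructor
    · rintro ⟨y, ⟨g, hy⟩, rfl⟩
      have hy' : y ∈ Torbit T (g • x) := by
        rw [← hsm g]; exact hy
      exact ⟨g • x, ⟨g, rfl⟩, (torbit_eq_of_mem (hper _ ⟨g, rfl⟩) hy').symm⟩
    · rintro ⟨y, ⟨g, rfl⟩, rfl⟩
      exact ⟨g • x, ⟨g, ⟨x, mem_torbit_self T x, rfl⟩⟩, rfl⟩
  have hS : (MulAction.orbit G x).Finite := Set.finite_range _
  -- fiber computation
  have hfiber : ∀ g : G,
      (MulAction.orbit G x ∩ {z | Torbit T z = Torbit T (g • x)}).ncard = k := by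
    intro g
    have h1 : MulAction.orbit G x ∩ {z | Torbit T z = Torbit T (g • x)}
        = MulAction.orbit G x ∩ Torbit T (g • x) := by
      ext z
      simp only [Set.mem_inter_iff, Set.mem_setOf_eq]
      constructor
      · rintro ⟨hz, he⟩
        exact ⟨hz, he ▸ mem_torbit_self T z⟩
      · rintro ⟨hz, hm⟩
        exact ⟨hz, torbit_eq_of_mem (hper _ ⟨g, rfl⟩) hm⟩
    have h2 : MulAction.orbit G x ∩ Torbit T (g • x)
        = g • (Torbit T x ∩ MulAction.orbit G x) := by
      rw [Set.smul_set_inter, hsm g, MulAction.smul_orbit, Set.inter_comm]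
    rw [h1, h2, ← hk]
    show ((g • ·) '' _).ncard = _
    exact Set.ncard_image_of_injective _ (MulAction.injective g)
  set Sf : Finset X := hS.toFinset with hSfdef
  have hSf : (Sf : Set X) = MulAction.orbit G x := hS.coe_toFinset
  have hcard : Sf.card = H.index := by
    rw [← hH, Subgroup.index_eq_card, ← Nat.card_congr (MulAction.orbitEquivQuotientStabilizer G x),
      Nat.card_coe_set_eq, ← hSf, Set.ncard_coe_finset]
  set f : X → Set X := Torbit T with hfdef
  set F : Finset (Set X) := Sf.image f with hFdef
  have hmain : Sf.card = F.card * k := by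
    rw [Finset.card_eq_sum_card_image f Sf]
    rw [Finset.sum_congr rfl (fun A hA => ?_), Finset.sum_const, smul_eq_mul]
    obtain ⟨y, hy, rfl⟩ := Finset.mem_image.mp hA
    obtain ⟨g, rfl⟩ : y ∈ MulAction.orbit G x := by rw [← hSf]; exact_mod_cast hy
    rw [← hfiber g, ← Set.ncard_coe_finset]
    congr 1
    rw [Finset.coe_filter, ← hSf]
    rfl
  have hkpos : 0 < k := by
    rw [← hk]
    exact (Set.ncard_pos (hS.subset Set.inter_subset_right)).mpr
      ⟨x, mem_torbit_self T x, MulAction.mem_orbit_self x⟩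
  have hFcard : {A : Set X | ∃ y ∈ ⋃ g : G, (g • ·) '' Torbit T x, A = Torbit T y}.ncard = F.card := by
    rw [hA, ← Set.ncard_coe_finset F, hFdef, Finset.coe_image, hSf]
  constructor
  · exact ⟨F.card, by rw [← hcard, hmain, Nat.mul_comm]⟩
  · rw [hFcard, ← hcard, hmain, Nat.mul_div_cancel _ hkpos]
end

section
/- Let G be a finite group acting on a set X commuting with T : X → X, and let x be a periodic point of T. Then the factor k = |O_T(x) ∩ O_G(x)| by which O_T(x) shortens satisfies k ≤ max{ord(g) : g ∈ G}, the maximal order of an element of G. In particular, if k = |G| then G is cyclic. -/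
theorem stmt_8 {X G : Type*} [Group G] [Fintype G] [MulAction G X]
    (T : X → X) (hcomm : ∀ (g : G) (y : X), g • T y = T (g • y))
    (x : X) (hx : x ∈ Function.periodicPts T) (k : ℕ)
    (hk : (Torbit T x ∩ MulAction.orbit G x).ncard = k) :
    (∃ g : G, k ≤ orderOf g) ∧ (k = Fintype.card G → IsCyclic G) := by
  classical
  set n := Function.minimalPeriod T x with hn_def
  have hn : 0 < n := Function.minimalPeriod_pos_of_mem_periodicPts hx
  haveI : NeZero n := ⟨hn.ne'⟩
  have hmod : ∀ a : ℕ, T^[a % n] x = T^[a] x := fun a =>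
    Function.iterate_mod_minimalPeriod_eq
  have hgcomm : ∀ (g : G) (i : ℕ) (y : X), g • T^[i] y = T^[i] (g • y) := by
    intro g i
    induction i with
    | zero => intro y; simp
    | succ m ih =>
      intro y
      rw [Function.iterate_succ_apply', Function.iterate_succ_apply', hcomm, ih]
  -- subgroup of ZMod n
  let H : AddSubgroup (ZMod n) :=
  { carrier := {i : ZMod n | ∃ g : G, g • x = T^[i.val] x}
    zero_mem' := ⟨1, by simp [ZMod.val_zero]⟩
    add_mem' := by
      rintro a b ⟨g, hg⟩ ⟨h, hh⟩
      refine ⟨g * h, ?_⟩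
      calc (g * h) • x = g • (h • x) := mul_smul g h x
        _ = g • T^[b.val] x := by rw [hh]
        _ = T^[b.val] (g • x) := hgcomm g b.val x
        _ = T^[b.val] (T^[a.val] x) := by rw [hg]
        _ = T^[b.val + a.val] x := (Function.iterate_add_apply T _ _ x).symm
        _ = T^[(a + b).val] x := by rw [ZMod.val_add, hmod, Nat.add_comm]
    neg_mem' := by
      rintro a ⟨g, hg⟩
      refine ⟨g⁻¹, ?_⟩
      have hz : ((-a).val + a.val) % n = 0 := by
        have h := ZMod.val_add (-a) a
        rw [neg_add_cancel, ZMod.val_zero] at h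
        exact h.symm
      have h1 : T^[(-a).val + a.val] x = x := by
        rw [← hmod, hz, Function.iterate_zero_apply]
      calc g⁻¹ • x = g⁻¹ • T^[(-a).val + a.val] x := by rw [h1]
        _ = g⁻¹ • T^[(-a).val] (T^[a.val] x) := by rw [Function.iterate_add_apply]
        _ = g⁻¹ • T^[(-a).val] (g • x) := by rw [hg]
        _ = T^[(-a).val] (g⁻¹ • (g • x)) := by rw [hgcomm]
        _ = T^[(-a).val] x := by rw [inv_smul_smul] }
  obtain ⟨d, hd⟩ := IsAddCyclic.exists_generator (α := H)
  -- the intersection is in bijection with H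
  have e : H ≃ ↥(Torbit T x ∩ MulAction.orbit G x) := by
    refine Equiv.ofBijective
      (fun i => ⟨T^[(i : ZMod n).val] x, ⟨(i : ZMod n).val, rfl⟩, ?_⟩) ⟨?_, ?_⟩
    · obtain ⟨g, hg⟩ := i.2
      exact ⟨g, hg⟩
    · intro a b hab
      have h1 : (a : ZMod n).val = (b : ZMod n).val := by
        have := Subtype.mk_eq_mk.mp hab
        exact Function.iterate_injOn_Iio_minimalPeriod
          (ZMod.val_lt _) (ZMod.val_lt _) this
      exact Subtype.ext (ZMod.val_injective n h1)
    · rintro ⟨y, ⟨i, hi⟩, g, hg⟩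
      refine ⟨⟨(i : ZMod n), g, ?_⟩, ?_⟩
      · rw [ZMod.val_natCast, hmod, hi]; exact hg
      · apply Subtype.ext
        simpa [ZMod.val_natCast, hmod] using hi
  have hkH : k = Nat.card H := by
    rw [← hk, ← Nat.card_coe_set_eq, Nat.card_congr e.symm]
  -- choose g corresponding to the generator
  obtain ⟨g, hg⟩ := d.2
  have hpow : ∀ m : ℕ, g ^ m • x = T^[m * (d : ZMod n).val] x := by
    intro m
    induction m with
    | zero => simp
    | succ m ih =>
      calc g ^ (m + 1) • x = g ^ m • (g • x) := by rw [pow_succ, mul_smul]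
        _ = g ^ m • T^[(d : ZMod n).val] x := by rw [hg]
        _ = T^[(d : ZMod n).val] (g ^ m • x) := hgcomm _ _ x
        _ = T^[(d : ZMod n).val] (T^[m * (d : ZMod n).val] x) := by rw [ih]
        _ = T^[(d : ZMod n).val + m * (d : ZMod n).val] x :=
            (Function.iterate_add_apply T _ _ x).symm
        _ = T^[(m + 1) * (d : ZMod n).val] x := by ring_nf
  have hord : addOrderOf (d : ZMod n) ∣ orderOf g := by
    apply addOrderOf_dvd_of_nsmul_eq_zero
    have h0 : T^[orderOf g * (d : ZMod n).val] x = x := by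
      rw [← hpow, pow_orderOf_eq_one, one_smul]
    have hdvd : n ∣ orderOf g * (d : ZMod n).val :=
      Function.IsPeriodicPt.minimalPeriod_dvd h0
    have : ((orderOf g * (d : ZMod n).val : ℕ) : ZMod n) = 0 :=
      (ZMod.natCast_eq_zero_iff _ _).2 hdvd
    rw [Nat.cast_mul, ZMod.natCast_val, ZMod.cast_id] at this
    simpa [nsmul_eq_mul] using this
  have hcardH : Nat.card H = addOrderOf (d : ZMod n) := by
    rw [← addOrderOf_eq_card_of_forall_mem_zmultiples hd]
    exact (addOrderOf_injective H.subtype Subtype.coe_injective d).symm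
  have hle : k ≤ orderOf g := by
    rw [hkH, hcardH]
    exact Nat.le_of_dvd (orderOf_pos g) hord
  refine ⟨⟨g, hle⟩, fun hcard => ?_⟩
  have h1 : orderOf g ≤ Nat.card G := Nat.le_of_dvd Nat.card_pos (orderOf_dvd_natCard g)
  have h2 : Nat.card G ≤ orderOf g := by
    rw [Nat.card_eq_fintype_card, ← hcard]; exact hle
  exact isCyclic_of_orderOf_eq_card g (le_antisymm h1 h2)
end

section
/- Let (X,T) be a topological dynamical system with finitely many orbits of each length, G a finite group acting on X commuting with T, (X',T') the quotient. Then O_n(T') ≤ O_n(T) + Σ_{δ ∈ Δ(G), δ>1} O_{δn}(T) for all n ≥ 1, where O_m(S) denotes the number of closed orbits of length m of S. -/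
/-- The number of closed orbits of length `n` of a map. -/
noncomputable def orbitCount {X : Type*} (T : X → X) (n : ℕ) : ℕ :=
  {A : Set X | ∃ x, Function.minimalPeriod T x = n ∧ A = Torbit T x}.ncard

open Function

section ClosedOrbits

variable {X Y : Type*}

-- `orbitCount T n` unfolds to `(closedOrbits T n).ncard`.
def closedOrbits (T : X → X) (n : ℕ) : Set (Set X) :=
  {A | ∃ x, minimalPeriod T x = n ∧ A = Torbit T x}

lemma closedOrbits_finite {T : X → X} {n : ℕ} (h : {y | T^[n] y = y}.Finite) :
    (closedOrbits T n).Finite :=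
  (h.image (Torbit T)).subset <| by
    rintro _ ⟨x, hx, rfl⟩
    exact ⟨x, hx ▸ isPeriodicPt_minimalPeriod T x, rfl⟩

lemma Function.Semiconj.image_Torbit {π : X → Y} {T : X → X} {T' : Y → Y}
    (h : Semiconj π T T') (x : X) : π '' Torbit T x = Torbit T' (π x) := by
  show π '' Set.range (fun i => T^[i] x) = Set.range (fun i => T'^[i] (π x))
  rw [← Set.range_comp]
  exact congrArg Set.range (funext fun i => h.iterate_right i x)

section GroupAction

variable {G : Type*} [Group G] [MulAction G X] {T : X → X}

lemma iterate_mul_eq_pow_smul (hcomm : ∀ g : G, Function.Commute (g • ·) T) {n : ℕ} {g : G}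
    {x : X} (hg : g • x = T^[n] x) (k : ℕ) : T^[k * n] x = g ^ k • x := by
  induction k with
  | zero => simp
  | succ k ih =>
    rw [Nat.succ_mul, add_comm, iterate_add_apply, ih, ← ((hcomm _).iterate_right n).eq, ← hg,
      smul_smul, pow_succ]

lemma exists_minimalPeriod_eq_orderOf_mul [Finite G]
    (hcomm : ∀ g : G, Function.Commute (g • ·) T) {n : ℕ} (hn : 0 < n) {g : G} {x : X}
    (hg : g • x = T^[n] x) (hdvd : n ∣ minimalPeriod T x) : ∃ h : G, minimalPeriod T x = orderOf h * n := by
  obtain ⟨δ, hδ⟩ := hdvd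
  have hper : IsPeriodicPt T (orderOf g * n) x := by
    rw [IsPeriodicPt, IsFixedPt, iterate_mul_eq_pow_smul hcomm hg, pow_orderOf_eq_one, one_smul]
  have hδg : δ ∣ orderOf g := by
    have := hper.minimalPeriod_dvd
    rw [hδ, mul_comm] at this
    exact Nat.dvd_of_mul_dvd_mul_right hn this
  exact ⟨g ^ (orderOf g / δ), by rw [orderOf_pow_orderOf_div (orderOf_pos g).ne' hδg, hδ, mul_comm]⟩

variable {T' : Quotient (MulAction.orbitRel G X) → Quotient (MulAction.orbitRel G X)}

lemma exists_minimalPeriod_eq_orderOf_mul_of_quotient [Finite G]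
    (hcomm : ∀ g : G, Function.Commute (g • ·) T) (hT' : Semiconj (Quotient.mk _) T T') {n : ℕ}
    (hn : 0 < n) {y : X} (hy : minimalPeriod T' (Quotient.mk _ y) = n) :
    ∃ h : G, minimalPeriod T y = orderOf h * n := by
  have hmk : Quotient.mk (MulAction.orbitRel G X) (T^[n] y) = Quotient.mk _ y := by
    rw [hT'.iterate_right n y, ← hy, iterate_minimalPeriod]
  obtain ⟨g, hg⟩ := MulAction.mem_orbit_iff.mp (MulAction.orbitRel_apply.mp (Quotient.eq.mp hmk))
  refine exists_minimalPeriod_eq_orderOf_mul hcomm hn hg ?_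
  exact hy ▸ ((isPeriodicPt_minimalPeriod T y).map hT').minimalPeriod_dvd

lemma closedOrbits_quotient_subset [Fintype G] (hcomm : ∀ g : G, Function.Commute (g • ·) T)
    (hT' : Semiconj (Quotient.mk _) T T') {n : ℕ} (hn : 0 < n) :
    closedOrbits T' n ⊆ (Quotient.mk _ '' ·) ''
      ⋃ δ ∈ Finset.image orderOf (Finset.univ : Finset G), closedOrbits T (δ * n) := by
  rintro _ ⟨x', hx', rfl⟩
  obtain ⟨h, hh⟩ := exists_minimalPeriod_eq_orderOf_mul_of_quotient hcomm hT' hn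
    ((Quotient.out_eq x').symm ▸ hx')
  refine ⟨Torbit T x'.out, ?_, (hT'.image_Torbit _).trans (by rw [Quotient.out_eq])⟩
  exact Set.mem_biUnion (Finset.mem_image_of_mem _ (Finset.mem_univ h)) ⟨x'.out, hh, rfl⟩

end GroupAction

end ClosedOrbits

theorem stmt_12_general {X : Type*} [MetricSpace X]
    {G : Type*} [Group G] [Fintype G] [MulAction G X]
    (T : X ≃ₜ X) (hcomm : ∀ (g : G) (y : X), g • T y = T (g • y))
    (hfin : ∀ n : ℕ, {y : X | (⇑T)^[n] y = y}.Finite)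
    (T' : Quotient (MulAction.orbitRel G X) → Quotient (MulAction.orbitRel G X))
    (hT' : ∀ y : X, T' (Quotient.mk (MulAction.orbitRel G X) y) =
        Quotient.mk (MulAction.orbitRel G X) (T y)) :
    ∀ n : ℕ, 1 ≤ n →
      orbitCount T' n ≤ orbitCount (⇑T) n +
        ∑ δ ∈ (Finset.image orderOf (Finset.univ : Finset G)).erase 1,
          orbitCount (⇑T) (δ * n) := by
  intro n hn
  set Δ := Finset.image orderOf (Finset.univ : Finset G)
  have hsemiconj : Semiconj (Quotient.mk (MulAction.orbitRel G X)) T T' := fun y => (hT' y).symm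
  have hfinite : (⋃ δ ∈ Δ, closedOrbits T (δ * n)).Finite :=
    Δ.finite_toSet.biUnion fun δ _ => closedOrbits_finite (hfin _)
  calc orbitCount T' n
      ≤ ((Quotient.mk _ '' ·) '' ⋃ δ ∈ Δ, closedOrbits T (δ * n)).ncard :=
        Set.ncard_le_ncard (closedOrbits_quotient_subset hcomm hsemiconj hn) (hfinite.image _)
    _ ≤ (⋃ δ ∈ Δ, closedOrbits T (δ * n)).ncard := Set.ncard_image_le hfinite
    _ ≤ ∑ δ ∈ Δ, orbitCount T (δ * n) := Δ.set_ncard_biUnion_le _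
    _ = _ := by
      rw [← Finset.add_sum_erase Δ _ (Finset.mem_image_of_mem _ (Finset.mem_univ 1)), orderOf_one,
        one_mul]

theorem stmt_12 {X : Type*} [MetricSpace X] [CompactSpace X]
    {G : Type*} [Group G] [Fintype G] [MulAction G X]
    (hcont : ∀ g : G, Continuous fun y : X => g • y)
    (T : X ≃ₜ X) (hcomm : ∀ (g : G) (y : X), g • T y = T (g • y))
    (hfin : ∀ n : ℕ, {y : X | (⇑T)^[n] y = y}.Finite)
    (T' : Quotient (MulAction.orbitRel G X) → Quotient (MulAction.orbitRel G X))
    (hT' : ∀ y : X, T' (Quotient.mk (MulAction.orbitRel G X) y) =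
        Quotient.mk (MulAction.orbitRel G X) (T y)) :
    ∀ n : ℕ, 1 ≤ n →
      orbitCount T' n ≤ orbitCount (⇑T) n +
        ∑ δ ∈ (Finset.image orderOf (Finset.univ : Finset G)).erase 1,
          orbitCount (⇑T) (δ * n) :=
  stmt_12_general T hcomm hfin T' hT'
end
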